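/- arXiv:1404.7734 — 4 statements merged into one kernel-verified Lean document; each statement's English description precedes it below -/
import Mathlib

section
/- CAF_sem is a proper subclass of CAF_pref, and for each semantics σ ∈ {pref, sem, stage} one has the proper inclusions CAF_stb ⊊ CAF_σ ⊊ CAF_naive. -/
structure AF where
  A : Finset ℕ
  R : Set (ℕ × ℕ)
  R_sub : ∀ p ∈ R, p.1 ∈ A ∧ p.2 ∈ A

namespace AF

def cf (F : AF) : Set (Set ℕ) :=
  {S | S ⊆ ↑F.A ∧ ∀ a ∈ S, ∀ b ∈ S, (a, b) ∉ F.R}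

def defends (F : AF) (S : Set ℕ) (a : ℕ) : Prop :=
  ∀ b, (b, a) ∈ F.R → ∃ s ∈ S, (s, b) ∈ F.R

def adm (F : AF) : Set (Set ℕ) :=
  {S | S ∈ F.cf ∧ ∀ a ∈ S, F.defends S a}

def rng (F : AF) (S : Set ℕ) : Set ℕ :=
  S ∪ {b | ∃ s ∈ S, (s, b) ∈ F.R}

def naive (F : AF) : Set (Set ℕ) :=
  {S | S ∈ F.cf ∧ ∀ T ∈ F.cf, S ⊆ T → S = T}

def stb (F : AF) : Set (Set ℕ) :=
  {S | S ∈ F.cf ∧ ∀ a ∈ F.A, a ∉ S → ∃ s ∈ S, (s, a) ∈ F.R}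

def pref (F : AF) : Set (Set ℕ) :=
  {S | S ∈ F.adm ∧ ∀ T ∈ F.adm, S ⊆ T → S = T}

def stage (F : AF) : Set (Set ℕ) :=
  {S | S ∈ F.cf ∧ ¬ ∃ T ∈ F.cf, F.rng S ⊂ F.rng T}

def sem (F : AF) : Set (Set ℕ) :=
  {S | S ∈ F.adm ∧ ¬ ∃ T ∈ F.adm, F.rng S ⊂ F.rng T}

end AF

abbrev Semantics := AF → Set (Set ℕ)

def StandardSemantics : Set Semantics :=
  {AF.naive, AF.stb, AF.stage, AF.pref, AF.sem}

def AFCompact (σ : Semantics) (F : AF) : Prop :=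
  ∀ a ∈ F.A, ∃ S ∈ σ F, a ∈ S

def CAF (σ : Semantics) : Set AF := {F | AFCompact σ F}

def ArgS (𝕊 : Set (Set ℕ)) : Set ℕ := ⋃₀ 𝕊

def PairsS (𝕊 : Set (Set ℕ)) : Set (ℕ × ℕ) :=
  {p | ∃ S ∈ 𝕊, p.1 ∈ S ∧ p.2 ∈ S}

def IsExtensionSet (𝕊 : Set (Set ℕ)) : Prop := (ArgS 𝕊).Finite

def AFStep (F : AF) (a b : ℕ) : Prop := (a, b) ∈ F.R ∨ (b, a) ∈ F.R

def AFConnected (F : AF) : Prop :=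
  ∀ a ∈ F.A, ∀ b ∈ F.A, Relation.ReflTransGen (AFStep F) a b

def sameComp (F : AF) (a b : ℕ) : Prop := Relation.ReflTransGen (AFStep F) a b

def comps (F : AF) : Set (Set ℕ) :=
  {K | ∃ a ∈ F.A, K = {b ∈ (↑F.A : Set ℕ) | sameComp F a b}}

def nopairs (𝕊 : Set (Set ℕ)) (a b : ℕ) : Prop :=
  a ∈ ArgS 𝕊 ∧ b ∈ ArgS 𝕊 ∧ (a, b) ∉ PairsS 𝕊

def compsS (𝕊 : Set (Set ℕ)) : Set (Set ℕ) :=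
  {K | ∃ a ∈ ArgS 𝕊, K = {b ∈ ArgS 𝕊 | Relation.ReflTransGen (nopairs 𝕊) a b}}

noncomputable def sigmaMax (σ : Semantics) (n : ℕ) : ℕ :=
  sSup {k | ∃ F : AF, F.A.card = n ∧ (σ F).ncard = k}

noncomputable def sigmaMaxCon (σ : Semantics) (n : ℕ) : ℕ :=
  sSup {k | ∃ F : AF, F.A.card = n ∧ AFConnected F ∧ (σ F).ncard = k}

noncomputable def sigmaMax2 (σ : Semantics) (n : ℕ) : ℕ :=
  sSup ({k | ∃ F : AF, F.A.card = n ∧ (σ F).ncard = k} \ {sigmaMax σ n})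

def cfSet (𝕊 : Set (Set ℕ)) : Set (Set ℕ) :=
  {S | S ⊆ ArgS 𝕊 ∧ ∀ a ∈ S, ∀ b ∈ S, (a, b) ∈ PairsS 𝕊}

def plusSet (𝕊 : Set (Set ℕ)) : Set (Set ℕ) :=
  {S | S ∈ cfSet 𝕊 ∧ ∀ T ∈ cfSet 𝕊, S ⊆ T → S = T}

def minusSet (𝕊 : Set (Set ℕ)) : Set (Set ℕ) := plusSet 𝕊 \ 𝕊

def Sig (σ : Semantics) : Set (Set (Set ℕ)) := {𝕊 | ∃ F : AF, σ F = 𝕊}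

def cSig (σ : Semantics) : Set (Set (Set ℕ)) :=
  {𝕊 | ∃ F : AF, AFCompact σ F ∧ σ F = 𝕊}

def Pcon (σ : Semantics) (n : ℕ) : Set ℕ :=
  {k | ∃ F : AF, AFCompact σ F ∧ AFConnected F ∧ F.A.card = n ∧ (σ F).ncard = k}

open Classical in
noncomputable def restrictAF (F : AF) (K : Set ℕ) : AF where
  A := F.A.filter (fun a => a ∈ K)
  R := {p | p ∈ F.R ∧ p.1 ∈ K ∧ p.2 ∈ K}
  R_sub := fun p hp => by
    have h := F.R_sub p hp.1
    simp only [Finset.mem_filter]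
    exact ⟨⟨h.1, hp.2.1⟩, ⟨h.2, hp.2.2⟩⟩

def IsExclusionMapping (𝕊 : Set (Set ℕ)) (Rm : Set (ℕ × ℕ)) : Prop :=
  ∃ f : Set ℕ → ℕ,
    (∀ S ∈ minusSet 𝕊, f S ∈ ArgS 𝕊 ∧ f S ∉ S) ∧
    Rm = {p | ∃ S ∈ minusSet 𝕊, p.1 ∈ S ∧ p.2 = f S ∧ p ∉ PairsS 𝕊}

def Independent (𝕊 : Set (Set ℕ)) : Prop :=
  ∃ Rm : Set (ℕ × ℕ), IsExclusionMapping 𝕊 Rm ∧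
    (∀ a b, (a, b) ∈ Rm → (b, a) ∈ Rm → a = b) ∧
    ∀ S ∈ 𝕊, ∀ a ∈ ArgS 𝕊 \ S, ∃ s ∈ S, (s, a) ∉ Rm ∪ PairsS 𝕊

def ConflictExplicit (σ : Semantics) (F : AF) : Prop :=
  ∀ a ∈ F.A, ∀ b ∈ F.A, (a, b) ∉ PairsS (σ F) → (a, b) ∈ F.R ∨ (b, a) ∈ F.R

noncomputable def canonicalCF (𝕊 : Set (Set ℕ)) (h : IsExtensionSet 𝕊) : AF where
  A := h.toFinset
  R := {p | p.1 ∈ ArgS 𝕊 ∧ p.2 ∈ ArgS 𝕊 ∧ p ∉ PairsS 𝕊}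
  R_sub := fun p hp => by
    exact ⟨(Set.Finite.mem_toFinset (hs := h)).2 hp.1, (Set.Finite.mem_toFinset (hs := h)).2 hp.2.1⟩

/-!
Every stable extension is semi-stable and stage, semi-stable extensions are preferred, and every
conflict-free set extends to a naive one; this gives the inclusions. Four small frameworks make
them proper. In the path `0 → 1 → 2`, the argument `1` is attacked by an unattacked argument, so
it lies in no admissible set; as `{0, 2}` is stable, the stage extensions are stable, hence
admissible, too. The 3-cycle has no stable extension, yet each singleton is a stage extension,
its range missing only one argument. A 3-cycle whose members are guarded against a rival `0` is
pref-compact, but it has a stable extension, so its semi-stable extensions are stable, and none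
contains `0`. Two guarded 3-cycles whose guards form a clique have no stable extension, but every
admissible set ranges over one cycle only, so each cycle member together with its guard is
semi-stable.
-/

namespace AF

variable {F : AF} {S T : Set ℕ}

lemma rng_mono (h : S ⊆ T) : F.rng S ⊆ F.rng T := by
  rintro x (hx | ⟨s, hs, hsx⟩)
  exacts [Or.inl (h hx), Or.inr ⟨s, h hs, hsx⟩]

lemma rng_subset (hS : S ⊆ F.A) : F.rng S ⊆ F.A := by
  rintro x (hx | ⟨s, -, hsx⟩)
  exacts [hS hx, (F.R_sub _ hsx).2]

lemma mem_stb_iff : S ∈ F.stb ↔ S ∈ F.cf ∧ ↑F.A ⊆ F.rng S := by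
  refine and_congr_right fun hS => ⟨fun h a ha => ?_, fun h a ha haS => ?_⟩
  · by_cases haS : a ∈ S
    exacts [Or.inl haS, Or.inr (h a ha haS)]
  · rcases h ha with haS' | hatt
    exacts [absurd haS' haS, hatt]

lemma stb_subset_adm : F.stb ⊆ F.adm := by
  rintro S ⟨hS, hatt⟩
  refine ⟨hS, fun a ha b hba => ?_⟩
  by_cases hb : b ∈ S
  exacts [absurd hba (hS.2 b hb a ha), hatt b (F.R_sub _ hba).1 hb]

lemma sem_subset_pref : F.sem ⊆ F.pref := by
  rintro S ⟨hS, hmax⟩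
  refine ⟨hS, fun T hT hST => hST.antisymm fun t ht => ?_⟩
  have hrng : F.rng T ⊆ F.rng S := by
    by_contra h
    exact hmax ⟨T, hT, ssubset_of_subset_not_subset (rng_mono hST) h⟩
  rcases hrng (Or.inl ht) with htS | ⟨s, hs, hst⟩
  exacts [htS, absurd hst (hT.1.2 s (hST hs) t ht)]

lemma not_rng_ssubset_of_stb (hS : S ∈ F.stb) (hT : T ⊆ F.A) : ¬ F.rng S ⊂ F.rng T :=
  fun h => h.2 ((rng_subset hT).trans (mem_stb_iff.1 hS).2)

lemma stb_subset_sem : F.stb ⊆ F.sem := fun _ hS =>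
  ⟨stb_subset_adm hS, fun ⟨_, hT, h⟩ => not_rng_ssubset_of_stb hS hT.1.1 h⟩

lemma stb_subset_pref : F.stb ⊆ F.pref := fun _ hS => sem_subset_pref (stb_subset_sem hS)

lemma stb_subset_stage : F.stb ⊆ F.stage := fun _ hS =>
  ⟨hS.1, fun ⟨_, hT, h⟩ => not_rng_ssubset_of_stb hS hT.1 h⟩

lemma mem_stb_of_not_rng_ssubset {E : Set ℕ} (hE : E ∈ F.stb) (hS : S ∈ F.cf)
    (h : ¬ F.rng S ⊂ F.rng E) : S ∈ F.stb := by
  refine mem_stb_iff.2 ⟨hS, ?_⟩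
  have hE' := (mem_stb_iff.1 hE).2
  by_contra hA
  exact h ⟨(rng_subset hS.1).trans hE', fun hES => hA (hE'.trans hES)⟩

lemma stage_subset_stb {E : Set ℕ} (hE : E ∈ F.stb) : F.stage ⊆ F.stb :=
  fun _ hS => mem_stb_of_not_rng_ssubset hE hS.1 fun h => hS.2 ⟨E, hE.1, h⟩

lemma sem_subset_stb {E : Set ℕ} (hE : E ∈ F.stb) : F.sem ⊆ F.stb :=
  fun _ hS => mem_stb_of_not_rng_ssubset hE hS.1.1 fun h => hS.2 ⟨E, stb_subset_adm hE, h⟩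

lemma exists_maximal_superset {𝒮 : Set (Set ℕ)} (h𝒮 : ∀ T ∈ 𝒮, T ⊆ F.A) (hS : S ∈ 𝒮) :
    ∃ T ∈ 𝒮, S ⊆ T ∧ ∀ U ∈ 𝒮, T ⊆ U → T = U := by
  have hfin : 𝒮.Finite := F.A.finite_toSet.finite_subsets.subset h𝒮
  obtain ⟨T, hST, hT⟩ := hfin.exists_le_maximal hS
  exact ⟨T, hT.prop, hST, fun U hU hTU => hTU.antisymm (hT.2 hU hTU)⟩

lemma exists_naive_superset (hS : S ∈ F.cf) : ∃ T ∈ F.naive, S ⊆ T := by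
  obtain ⟨T, hT, hST, hmax⟩ := exists_maximal_superset (fun _ hT => hT.1) hS
  exact ⟨T, ⟨hT, hmax⟩, hST⟩

lemma exists_pref_superset (hS : S ∈ F.adm) : ∃ T ∈ F.pref, S ⊆ T := by
  obtain ⟨T, hT, hST, hmax⟩ := exists_maximal_superset (fun _ hT => hT.1.1) hS
  exact ⟨T, ⟨hT, hmax⟩, hST⟩

lemma notMem_adm_of_attacked_by_unattacked {a b : ℕ} (hba : (b, a) ∈ F.R)
    (hb : ∀ c ∈ F.A, (c, b) ∉ F.R) (hS : S ∈ F.adm) : a ∉ S := fun ha => by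
  obtain ⟨c, hc, hcb⟩ := hS.2 a ha b hba
  exact hb c (F.R_sub _ hcb).1 hcb

lemma false_of_stb_of_three_cycle (hS : S ∈ F.stb) {a b c : ℕ} {N : Finset ℕ}
    (hN : ∀ x ∈ N, x ∉ S) (hab : (a, b) ∈ F.R) (hbc : (b, c) ∈ F.R) (hca : (c, a) ∈ F.R)
    (hpred : ∀ x ∈ F.A, ((x, a) ∈ F.R → x = c ∨ x ∈ N) ∧ ((x, b) ∈ F.R → x = a ∨ x ∈ N) ∧
      ((x, c) ∈ F.R → x = b ∨ x ∈ N)) : False := by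
  obtain ⟨⟨hSA, hcf⟩, hatt⟩ := hS
  have attacker_mem {y z : ℕ} (hy : ∀ x ∈ F.A, (x, y) ∈ F.R → x = z ∨ x ∈ N)
      (hyA : y ∈ F.A) (hyS : y ∉ S) : z ∈ S := by
    obtain ⟨x, hxS, hxy⟩ := hatt y hyA hyS
    obtain rfl | hx := hy x (hSA hxS) hxy
    exacts [hxS, absurd hxS (hN x hx)]
  by_cases haS : a ∈ S
  · have hcS : c ∉ S := fun hcS => hcf c hcS a haS hca
    exact hcf a haS b (attacker_mem (fun x hx => (hpred x hx).2.2) (F.R_sub _ hbc).2 hcS) hab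
  · have hcS := attacker_mem (fun x hx => (hpred x hx).1) (F.R_sub _ hca).2 haS
    have hbS : b ∉ S := fun hbS => hcf b hbS c hcS hbc
    exact haS (attacker_mem (fun x hx => (hpred x hx).2.1) (F.R_sub _ hab).2 hbS)

lemma mem_stage_of_stb_eq_empty (hF : F.stb = ∅) (hS : S ∈ F.cf)
    (hmiss : ∀ x ∈ F.A, ∀ y ∈ F.A, x ∉ F.rng S → y ∉ F.rng S → x = y) : S ∈ F.stage := by
  refine ⟨hS, fun ⟨T, hT, hST⟩ => ?_⟩
  obtain ⟨z, hzT, hzS⟩ := Set.not_subset.1 hST.2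
  have hzA : z ∈ F.A := rng_subset hT.1 hzT
  have hTstb : T ∈ F.stb := mem_stb_iff.2 ⟨hT, fun x hx => by
    by_cases hxS : x ∈ F.rng S
    · exact hST.1 hxS
    · rwa [hmiss x hx z hzA hxS hzS]⟩
  simp [hF] at hTstb

lemma exists_mem_of_mem_rng_adm {C D : Finset ℕ}
    (hdef : ∀ c ∈ C, ∃ b ∈ F.A, (b, c) ∈ F.R ∧
      ∀ t ∈ F.A, (t, b) ∈ F.R → (c, t) ∈ F.R ∨ (t, c) ∈ F.R ∨ t ∈ D)
    (hattC : ∀ c ∈ C, ∀ s ∈ F.A, (s, c) ∈ F.R → s ∈ C ∨ s ∈ D)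
    (hT : T ∈ F.adm) {x : ℕ} (hxC : x ∈ C) (hx : x ∈ F.rng T) : ∃ d ∈ D, d ∈ T := by
  have of_mem {c : ℕ} (hcC : c ∈ C) (hcT : c ∈ T) : ∃ d ∈ D, d ∈ T := by
    obtain ⟨b, -, hbc, hb⟩ := hdef c hcC
    obtain ⟨t, htT, htb⟩ := hT.2 c hcT b hbc
    rcases hb t (F.R_sub _ htb).1 htb with hct | htc | htD
    · exact absurd hct (hT.1.2 c hcT t htT)
    · exact absurd htc (hT.1.2 t htT c hcT)
    · exact ⟨t, htD, htT⟩
  rcases hx with hxT | ⟨s, hsT, hsx⟩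
  · exact of_mem hxC hxT
  · rcases hattC x hxC s (F.R_sub _ hsx).1 hsx with hsC | hsD
    exacts [of_mem hsC hsT, ⟨s, hsD, hsT⟩]

lemma mem_sem_of_rng_dichotomy {P Q : Set ℕ}
    (hclass : ∀ T ∈ F.adm, Disjoint (F.rng T) P ∨ Disjoint (F.rng T) Q) (hS : S ∈ F.adm)
    (hP : ∀ x ∈ F.A, x ∉ P → x ∈ F.rng S) (hQ : ∃ q ∈ Q, q ∈ F.rng S) : S ∈ F.sem := by
  refine ⟨hS, fun ⟨T, hT, hST⟩ => ?_⟩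
  rcases hclass T hT with hTP | hTQ
  · refine hST.2 fun x hx => hP x (rng_subset hT.1.1 hx) fun hxP => ?_
    exact Set.disjoint_left.1 hTP hx hxP
  · obtain ⟨q, hqQ, hqS⟩ := hQ
    exact Set.disjoint_left.1 hTQ (hST.1 hqS) hqQ

end AF

lemma AFCompact.mono {σ τ : Semantics} {F : AF} (h : σ F ⊆ τ F) (hσ : AFCompact σ F) :
    AFCompact τ F := fun a ha =>
  let ⟨S, hS, haS⟩ := hσ a ha
  ⟨S, h hS, haS⟩

lemma afCompact_naive_of_irrefl {F : AF} (h : ∀ a ∈ F.A, (a, a) ∉ F.R) :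
    AFCompact AF.naive F := by
  intro a ha
  have hcf : ({a} : Set ℕ) ∈ F.cf := ⟨by simpa using ha, by simpa using h a ha⟩
  obtain ⟨T, hT, haT⟩ := AF.exists_naive_superset hcf
  exact ⟨T, hT, haT rfl⟩

lemma afCompact_pref_of_adm {F : AF} (h : ∀ a ∈ F.A, ∃ S ∈ F.adm, a ∈ S) :
    AFCompact AF.pref F := by
  intro a ha
  obtain ⟨S, hS, haS⟩ := h a ha
  obtain ⟨T, hT, hST⟩ := AF.exists_pref_superset hS
  exact ⟨T, hT, hST haS⟩

lemma CAF_mono {σ τ : Semantics} (h : ∀ F : AF, σ F ⊆ τ F) : CAF σ ⊆ CAF τ :=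
  fun F hF => hF.mono (h F)

lemma CAF_subset_naive {σ : Semantics} (h : ∀ F : AF, σ F ⊆ F.cf) : CAF σ ⊆ CAF AF.naive := by
  intro F hF a ha
  obtain ⟨S, hS, haS⟩ := hF a ha
  obtain ⟨T, hT, hST⟩ := AF.exists_naive_superset (h F hS)
  exact ⟨T, hT, hST haS⟩

lemma CAF_ssubset {σ τ : Semantics} (h : CAF σ ⊆ CAF τ) {F : AF} (hτ : AFCompact τ F)
    (hσ : ¬ AFCompact σ F) : CAF σ ⊂ CAF τ :=
  (Set.ssubset_iff_of_subset h).2 ⟨F, hτ, hσ⟩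

namespace AF

abbrev ofList (A : Finset ℕ) (L : List (ℕ × ℕ)) (h : ∀ p ∈ L, p.1 ∈ A ∧ p.2 ∈ A) : AF :=
  ⟨A, {p | p ∈ L}, h⟩

instance (A : Finset ℕ) (L : List (ℕ × ℕ)) (h) : DecidablePred (· ∈ (ofList A L h).R) :=
  fun p => inferInstanceAs (Decidable (p ∈ L))

variable {F : AF} [DecidablePred (· ∈ F.R)]

instance (S : Finset ℕ) (x : ℕ) : Decidable (x ∈ F.rng S) :=
  decidable_of_iff (x ∈ S ∨ ∃ s ∈ S, (s, x) ∈ F.R) (by simp [rng])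

instance (S : Finset ℕ) : Decidable ((S : Set ℕ) ∈ F.cf) :=
  decidable_of_iff (S ⊆ F.A ∧ ∀ a ∈ S, ∀ b ∈ S, (a, b) ∉ F.R) (by simp [cf])

instance (S : Finset ℕ) : Decidable ((S : Set ℕ) ∈ F.adm) :=
  decidable_of_iff ((S : Set ℕ) ∈ F.cf ∧ ∀ a ∈ S, ∀ b ∈ F.A, (b, a) ∈ F.R → ∃ s ∈ S, (s, b) ∈ F.R)
    ⟨fun ⟨hS, hdef⟩ => ⟨hS, fun a ha b hba => hdef a ha b (F.R_sub _ hba).1 hba⟩,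
      fun ⟨hS, hdef⟩ => ⟨hS, fun a ha b _ hba => hdef a ha b hba⟩⟩

instance (S : Finset ℕ) : Decidable ((S : Set ℕ) ∈ F.stb) :=
  decidable_of_iff ((S : Set ℕ) ∈ F.cf ∧ ∀ a ∈ F.A, a ∉ S → ∃ s ∈ S, (s, a) ∈ F.R) (by simp [stb])

end AF

abbrev pathAF : AF := .ofList {0, 1, 2} [(0, 1), (1, 2)] (by decide)

lemma afCompact_naive_pathAF : AFCompact AF.naive pathAF :=
  afCompact_naive_of_irrefl (by decide)

lemma not_afCompact_pref_pathAF : ¬ AFCompact AF.pref pathAF := fun h => by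
  obtain ⟨S, hS, h1⟩ := h 1 (by decide)
  exact AF.notMem_adm_of_attacked_by_unattacked (b := 0) (by decide) (by decide) hS.1 h1

lemma not_afCompact_stage_pathAF : ¬ AFCompact AF.stage pathAF := fun h => by
  obtain ⟨S, hS, h1⟩ := h 1 (by decide)
  have hstb : (({0, 2} : Finset ℕ) : Set ℕ) ∈ pathAF.stb := by decide
  exact AF.notMem_adm_of_attacked_by_unattacked (b := 0) (by decide) (by decide)
    (AF.stb_subset_adm (AF.stage_subset_stb hstb hS)) h1

abbrev cycleAF : AF := .ofList {0, 1, 2} [(0, 1), (1, 2), (2, 0)] (by decide)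

lemma stb_cycleAF_eq_empty : cycleAF.stb = ∅ :=
  Set.eq_empty_of_forall_notMem fun _ hS => AF.false_of_stb_of_three_cycle hS (a := 0) (b := 1)
    (c := 2) (N := ∅) (by simp) (by decide) (by decide) (by decide) (by decide)

lemma afCompact_stage_cycleAF : AFCompact AF.stage cycleAF := by
  intro a ha
  refine ⟨(({a} : Finset ℕ) : Set ℕ), AF.mem_stage_of_stb_eq_empty stb_cycleAF_eq_empty ?_ ?_,
    by simp⟩ <;> revert a <;> decide

/-- The 3-cycle `1 → 2 → 3 → 1` in which `i` and its guard `i + 3` attack each other, and the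
guards and a rival `0` attack each other. -/
abbrev guardedCycleAF : AF := .ofList {0, 1, 2, 3, 4, 5, 6}
  [(1, 2), (2, 3), (3, 1), (1, 4), (4, 1), (2, 5), (5, 2), (3, 6), (6, 3),
   (0, 4), (4, 0), (0, 5), (5, 0), (0, 6), (6, 0)] (by decide)

lemma afCompact_pref_guardedCycleAF : AFCompact AF.pref guardedCycleAF := by
  refine afCompact_pref_of_adm fun a ha => ?_
  obtain ⟨S, -, hS, haS⟩ : ∃ S ∈ ([{0}, {1, 6}, {2, 4}, {3, 5}, {4, 5, 6}] : List (Finset ℕ)),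
      (S : Set ℕ) ∈ guardedCycleAF.adm ∧ a ∈ S := by
    revert a; decide
  exact ⟨S, hS, haS⟩

lemma not_afCompact_stb_guardedCycleAF : ¬ AFCompact AF.stb guardedCycleAF := fun h => by
  obtain ⟨S, hS, h0⟩ := h 0 (by decide)
  have h0N : ∀ x ∈ ({4, 5, 6} : Finset ℕ), (0, x) ∈ guardedCycleAF.R := by decide
  exact AF.false_of_stb_of_three_cycle hS (a := 1) (b := 2) (c := 3)
    (fun x hx hxS => hS.1.2 0 h0 x hxS (h0N x hx)) (by decide) (by decide) (by decide) (by decide)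

lemma not_afCompact_sem_guardedCycleAF : ¬ AFCompact AF.sem guardedCycleAF := fun h =>
  not_afCompact_stb_guardedCycleAF <|
    h.mono (AF.sem_subset_stb (E := (({4, 5, 6} : Finset ℕ) : Set ℕ)) (by decide))

/-- Two 3-cycles `0 → 1 → 2 → 0` and `3 → 4 → 5 → 3`, in which the guard `i + 6` of `i` attacks
the predecessor of `i`; the six guards form a clique. -/
abbrev twinCycleAF : AF := .ofList (Finset.range 12)
  ([(0, 1), (1, 2), (2, 0), (3, 4), (4, 5), (5, 3),
    (6, 2), (7, 0), (8, 1), (9, 5), (10, 3), (11, 4)] ++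
    ([6, 7, 8, 9, 10, 11] ×ˢ [6, 7, 8, 9, 10, 11]).filter fun p => p.1 ≠ p.2) (by decide)

lemma not_afCompact_stb_twinCycleAF : ¬ AFCompact AF.stb twinCycleAF := fun h => by
  obtain ⟨S, hS, h6⟩ := h 6 (by decide)
  have h6N : ∀ x ∈ ({9, 10, 11} : Finset ℕ), (6, x) ∈ twinCycleAF.R := by decide
  exact AF.false_of_stb_of_three_cycle hS (a := 3) (b := 4) (c := 5)
    (fun x hx hxS => hS.1.2 6 h6 x hxS (h6N x hx)) (by decide) (by decide) (by decide) (by decide)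

lemma twinCycleAF_rng_dichotomy : ∀ T ∈ twinCycleAF.adm,
    Disjoint (twinCycleAF.rng T) (({3, 4, 5} : Finset ℕ) : Set ℕ) ∨
      Disjoint (twinCycleAF.rng T) (({0, 1, 2} : Finset ℕ) : Set ℕ) := by
  intro T hT
  by_contra h
  simp only [not_or, Set.not_disjoint_iff, Finset.mem_coe] at h
  obtain ⟨⟨x, hx, hxG⟩, ⟨y, hy, hyE⟩⟩ := h
  obtain ⟨f, hf, hfT⟩ :=
    AF.exists_mem_of_mem_rng_adm (D := {6, 7, 8}) (by decide) (by decide) hT hyE hy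
  obtain ⟨g, hg, hgT⟩ :=
    AF.exists_mem_of_mem_rng_adm (D := {9, 10, 11}) (by decide) (by decide) hT hxG hx
  have hfg : ∀ f ∈ ({6, 7, 8} : Finset ℕ), ∀ g ∈ ({9, 10, 11} : Finset ℕ),
      (f, g) ∈ twinCycleAF.R := by
    decide
  exact hT.1.2 f hfT g hgT (hfg f hf g hg)

lemma afCompact_sem_twinCycleAF : AFCompact AF.sem twinCycleAF := by
  have hfirst : ∀ S ∈ ([{0, 6}, {1, 7}, {2, 8}] : List (Finset ℕ)),
      (S : Set ℕ) ∈ twinCycleAF.sem :=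
    fun S hS => AF.mem_sem_of_rng_dichotomy twinCycleAF_rng_dichotomy
      (by revert S; decide) (by revert S; decide) (by revert S; decide)
  have hsecond : ∀ S ∈ ([{3, 9}, {4, 10}, {5, 11}] : List (Finset ℕ)),
      (S : Set ℕ) ∈ twinCycleAF.sem :=
    fun S hS => AF.mem_sem_of_rng_dichotomy (fun T hT => (twinCycleAF_rng_dichotomy T hT).symm)
      (by revert S; decide) (by revert S; decide) (by revert S; decide)
  intro a ha
  obtain ⟨S, hS, haS⟩ : ∃ S ∈ ([{0, 6}, {1, 7}, {2, 8}] ++ [{3, 9}, {4, 10}, {5, 11}] :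
      List (Finset ℕ)), a ∈ S := by
    revert a; decide
  rcases List.mem_append.1 hS with hS | hS
  exacts [⟨S, hfirst S hS, haS⟩, ⟨S, hsecond S hS, haS⟩]

theorem compact_class_inclusions :
    CAF AF.sem ⊂ CAF AF.pref ∧
    ∀ σ ∈ ({AF.pref, AF.sem, AF.stage} : Set Semantics),
      CAF AF.stb ⊂ CAF σ ∧ CAF σ ⊂ CAF AF.naive := by
  have not_afCompact_sem_pathAF := mt (AFCompact.mono AF.sem_subset_pref) not_afCompact_pref_pathAF
  refine ⟨CAF_ssubset (CAF_mono fun _ => AF.sem_subset_pref) afCompact_pref_guardedCycleAF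
    not_afCompact_sem_guardedCycleAF, ?_⟩
  rintro σ (rfl | rfl | rfl)
  · exact ⟨CAF_ssubset (CAF_mono fun _ => AF.stb_subset_pref)
        (afCompact_sem_twinCycleAF.mono AF.sem_subset_pref) not_afCompact_stb_twinCycleAF,
      CAF_ssubset (CAF_subset_naive fun _ _ hS => hS.1.1) afCompact_naive_pathAF
        not_afCompact_pref_pathAF⟩
  · exact ⟨CAF_ssubset (CAF_mono fun _ => AF.stb_subset_sem) afCompact_sem_twinCycleAF
        not_afCompact_stb_twinCycleAF,
      CAF_ssubset (CAF_subset_naive fun _ _ hS => hS.1.1) afCompact_naive_pathAF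
        not_afCompact_sem_pathAF⟩
  · exact ⟨CAF_ssubset (CAF_mono fun _ => AF.stb_subset_stage) afCompact_stage_cycleAF
        fun h => by simpa [stb_cycleAF_eq_empty] using h 0 (by decide),
      CAF_ssubset (CAF_subset_naive fun _ _ hS => hS.1) afCompact_naive_pathAF
        not_afCompact_stage_pathAF⟩
end

section
/- Let σ ∈ {naive, stb, stage, pref, sem} and let 𝕊 be an extension-set with |Arg_𝕊| = n that is realized by some σ-compact AF (σ(F) = 𝕊 for some σ-compact F). If |𝕊| is a prime number, then |𝕊| ≤ σ_max^con(n). -/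
/-
Each of the five semantics splits along any set `K` that no attack crosses: `S ↦ (S ∩ K, S ∩ Kᶜ)`
is a bijection from `σ(F)` onto `σ(F|K) × σ(F|Kᶜ)`. If `|σ(F)| = p` is prime then `F` has an attack
`(a, b)`, since an attack-free framework has exactly one extension. Let `K` be the component of
`a`. By compactness `a` and `b` lie in extensions of `F|K`, necessarily different ones, so
`|σ(F|K)| > 1` and primality forces `|σ(F|K)| = p`. Finally, letting every argument attack every
argument outside `K` gives a connected framework on the same arguments whose extensions include
those of `F|K` (none of which is empty, as there are at least two), so `p ≤ σ_max^con(n)`.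
-/

open Set

section SetLemmas

variable {α : Type*} {X Y S T : Set α}

theorem subset_iff_inter_and_inter_compl (K : Set α) :
    X ⊆ Y ↔ X ∩ K ⊆ Y ∩ K ∧ X ∩ Kᶜ ⊆ Y ∩ Kᶜ := by
  refine ⟨fun h => ⟨inter_subset_inter_left K h, inter_subset_inter_left Kᶜ h⟩,
    fun ⟨hK, hKc⟩ x hx => ?_⟩
  by_cases hxK : x ∈ K
  exacts [(hK ⟨hx, hxK⟩).1, (hKc ⟨hx, hxK⟩).1]

theorem ssubset_iff_inter_and_inter_compl (K : Set α) :
    X ⊂ Y ↔ (X ∩ K ⊂ Y ∩ K ∧ X ∩ Kᶜ ⊆ Y ∩ Kᶜ) ∨ (X ∩ K ⊆ Y ∩ K ∧ X ∩ Kᶜ ⊂ Y ∩ Kᶜ) := by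
  simp only [ssubset_def]
  rw [subset_iff_inter_and_inter_compl K, subset_iff_inter_and_inter_compl K (X := Y)]
  tauto

theorem union_inter_eq_left_of_subset {K : Set α} (hS : S ⊆ K) (hT : T ⊆ Kᶜ) :
    (S ∪ T) ∩ K = S := by
  rw [union_inter_distrib_right, inter_eq_left.2 hS,
    (subset_compl_iff_disjoint_right.1 hT).inter_eq, union_empty]

theorem union_inter_compl_eq_right_of_subset {K : Set α} (hS : S ⊆ K) (hT : T ⊆ Kᶜ) :
    (S ∪ T) ∩ Kᶜ = T := by
  rw [union_comm, union_inter_eq_left_of_subset hT (by rwa [compl_compl])]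

end SetLemmas

namespace AF

variable {F : AF} {K S T : Set ℕ} {W : Set (Set ℕ)}

def NoAttackAcross (F : AF) (K : Set ℕ) : Prop := ∀ p ∈ F.R, (p.1 ∈ K ↔ p.2 ∈ K)

theorem NoAttackAcross.compl (h : F.NoAttackAcross K) : F.NoAttackAcross Kᶜ :=
  fun p hp => not_congr (h p hp)

theorem noAttackAcross_sameComp (F : AF) (a : ℕ) : F.NoAttackAcross {x | sameComp F a x} := by
  rintro ⟨x, y⟩ hxy
  exact ⟨fun h => h.tail (Or.inl hxy), fun h => h.tail (Or.inr hxy)⟩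

theorem mem_restrictAF_A {x : ℕ} : x ∈ (restrictAF F K).A ↔ x ∈ F.A ∧ x ∈ K := by
  simp [restrictAF]

theorem coe_restrictAF_A : ((restrictAF F K).A : Set ℕ) = ↑F.A ∩ K := by
  ext x
  exact mem_restrictAF_A

theorem subset_of_mem_cf_restrictAF (hS : S ∈ (restrictAF F K).cf) : S ⊆ ↑F.A ∩ K :=
  coe_restrictAF_A ▸ hS.1

theorem inter_mem_cf_restrictAF (hS : S ∈ F.cf) : S ∩ K ∈ (restrictAF F K).cf :=
  ⟨coe_restrictAF_A ▸ inter_subset_inter_left K hS.1,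
    fun a ha b hb hab => hS.2 a ha.1 b hb.1 hab.1⟩

theorem union_mem_cf (h : F.NoAttackAcross K) (hS : S ∈ (restrictAF F K).cf)
    (hT : T ∈ (restrictAF F Kᶜ).cf) : S ∪ T ∈ F.cf := by
  have hSK := subset_of_mem_cf_restrictAF hS
  have hTK := subset_of_mem_cf_restrictAF hT
  refine ⟨union_subset (hSK.trans inter_subset_left) (hTK.trans inter_subset_left), ?_⟩
  rintro a (ha | ha) b (hb | hb) hab
  · exact hS.2 a ha b hb ⟨hab, (hSK ha).2, (hSK hb).2⟩
  · exact (hTK hb).2 ((h _ hab).mp (hSK ha).2)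
  · exact (hTK ha).2 ((h _ hab).mpr (hSK hb).2)
  · exact hT.2 a ha b hb ⟨hab, (hTK ha).2, (hTK hb).2⟩

theorem inter_mem_adm_restrictAF (h : F.NoAttackAcross K) (hS : S ∈ F.adm) :
    S ∩ K ∈ (restrictAF F K).adm := by
  refine ⟨inter_mem_cf_restrictAF hS.1, fun x hx b hb => ?_⟩
  obtain ⟨s, hs, hsb⟩ := hS.2 x hx.1 b hb.1
  have hsK : s ∈ K := (h _ hsb).mpr hb.2.1
  exact ⟨s, ⟨hs, hsK⟩, hsb, hsK, hb.2.1⟩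

theorem union_mem_adm (h : F.NoAttackAcross K) (hS : S ∈ (restrictAF F K).adm)
    (hT : T ∈ (restrictAF F Kᶜ).adm) : S ∪ T ∈ F.adm := by
  have hSK := subset_of_mem_cf_restrictAF hS.1
  have hTK := subset_of_mem_cf_restrictAF hT.1
  refine ⟨union_mem_cf h hS.1 hT.1, ?_⟩
  rintro x (hx | hx) b hb
  · obtain ⟨s, hs, hsb⟩ := hS.2 x hx b ⟨hb, (h _ hb).mpr (hSK hx).2, (hSK hx).2⟩
    exact ⟨s, Or.inl hs, hsb.1⟩
  · obtain ⟨s, hs, hsb⟩ := hT.2 x hx b ⟨hb, (h.compl _ hb).mpr (hTK hx).2, (hTK hx).2⟩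
    exact ⟨s, Or.inr hs, hsb.1⟩

theorem inter_mem_stb_restrictAF (h : F.NoAttackAcross K) (hS : S ∈ F.stb) :
    S ∩ K ∈ (restrictAF F K).stb := by
  refine ⟨inter_mem_cf_restrictAF hS.1, fun x hx hxS => ?_⟩
  obtain ⟨hxA, hxK⟩ := mem_restrictAF_A.1 hx
  obtain ⟨s, hs, hsx⟩ := hS.2 x hxA fun hxS' => hxS ⟨hxS', hxK⟩
  have hsK : s ∈ K := (h _ hsx).mpr hxK
  exact ⟨s, ⟨hs, hsK⟩, hsx, hsK, hxK⟩

theorem union_mem_stb (h : F.NoAttackAcross K) (hS : S ∈ (restrictAF F K).stb)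
    (hT : T ∈ (restrictAF F Kᶜ).stb) : S ∪ T ∈ F.stb := by
  refine ⟨union_mem_cf h hS.1 hT.1, fun x hx hxST => ?_⟩
  by_cases hxK : x ∈ K
  · obtain ⟨s, hs, hsx⟩ := hS.2 x (mem_restrictAF_A.2 ⟨hx, hxK⟩) fun hxS => hxST (Or.inl hxS)
    exact ⟨s, Or.inl hs, hsx.1⟩
  · obtain ⟨s, hs, hsx⟩ := hT.2 x (mem_restrictAF_A.2 ⟨hx, hxK⟩) fun hxT => hxST (Or.inr hxT)
    exact ⟨s, Or.inr hs, hsx.1⟩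

theorem rng_empty (F : AF) : F.rng ∅ = ∅ := by
  simp [AF.rng]

theorem rng_inter_eq (h : F.NoAttackAcross K) (S : Set ℕ) :
    F.rng S ∩ K = (restrictAF F K).rng (S ∩ K) := by
  ext x
  constructor
  · rintro ⟨hx | ⟨s, hs, hsx⟩, hxK⟩
    · exact Or.inl ⟨hx, hxK⟩
    · exact Or.inr ⟨s, ⟨hs, (h _ hsx).mpr hxK⟩, hsx, (h _ hsx).mpr hxK, hxK⟩
  · rintro (hx | ⟨s, hs, hsx⟩)
    · exact ⟨Or.inl hx.1, hx.2⟩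
    · exact ⟨Or.inr ⟨s, hs.1, hsx.1⟩, hsx.2.2⟩

theorem rng_restrictAF_subset (hS : S ⊆ K) : (restrictAF F K).rng S ⊆ K := by
  rintro x (hx | ⟨s, -, hsx⟩)
  exacts [hS hx, hsx.2.2]

theorem rng_eq_self_of_R_eq_empty (hR : F.R = ∅) (S : Set ℕ) : F.rng S = S := by
  simp [AF.rng, hR]

theorem coe_A_mem_cf_of_R_eq_empty (hR : F.R = ∅) : (↑F.A : Set ℕ) ∈ F.cf :=
  ⟨subset_rfl, fun a _ b _ hab => by simp [hR] at hab⟩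

theorem adm_eq_cf_of_R_eq_empty (hR : F.R = ∅) : F.adm = F.cf := by
  ext S
  exact ⟨fun h => h.1, fun h => ⟨h, fun a _ b hb => by simp [hR] at hb⟩⟩

theorem stb_eq_singleton_of_R_eq_empty (hR : F.R = ∅) : F.stb = {(↑F.A : Set ℕ)} := by
  ext S
  refine ⟨fun hS => subset_antisymm hS.1.1 fun x hx => ?_, ?_⟩
  · by_contra hxS
    obtain ⟨s, -, hsx⟩ := hS.2 x hx hxS
    simp [hR] at hsx
  · rintro rfl
    exact ⟨coe_A_mem_cf_of_R_eq_empty hR, fun x hx hxA => absurd hx hxA⟩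

theorem stb_subset_singleton_empty (h : ∅ ∈ F.stb) : F.stb ⊆ {∅} := by
  intro S hS
  rw [mem_singleton_iff, ← subset_empty_iff]
  intro x hx
  obtain ⟨s, hs, -⟩ := h.2 x (hS.1.1 hx) (notMem_empty x)
  exact hs

-- The added attacks connect the framework, and the arguments outside `K`, now self-attacking,
-- lie in no conflict-free set.
def connectify (F : AF) (K : Set ℕ) : AF where
  A := F.A
  R := F.R ∪ ↑F.A ×ˢ (↑F.A \ K)
  R_sub := by
    rintro p (hp | hp)
    exacts [F.R_sub p hp, ⟨hp.1, hp.2.1⟩]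

theorem connectify_connected
    (hK : ∀ x ∈ F.A, ∀ y ∈ F.A, x ∈ K → y ∈ K → Relation.ReflTransGen (AFStep F) x y) :
    AFConnected (F.connectify K) := by
  intro x hx y hy
  by_cases hout : ∃ z ∈ F.A, z ∉ K
  · obtain ⟨z, hz, hzK⟩ := hout
    exact .head (Or.inl (Or.inr ⟨hx, hz, hzK⟩)) (.single (Or.inr (Or.inr ⟨hy, hz, hzK⟩)))
  · push Not at hout
    exact Relation.ReflTransGen.mono (r := AFStep F) (fun _ _ hab => Or.imp Or.inl Or.inl hab)
      _ _ (hK x hx y hy (hout x hx) (hout y hy))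

theorem cf_connectify : (F.connectify K).cf = (restrictAF F K).cf := by
  ext S
  refine ⟨fun ⟨hSA, hS⟩ => ?_, fun hS => ?_⟩
  · have hSK : S ⊆ K := fun x hx => by
      by_contra hxK
      exact hS x hx x hx (Or.inr ⟨hSA hx, hSA hx, hxK⟩)
    refine ⟨coe_restrictAF_A ▸ subset_inter hSA hSK, fun a ha b hb hab => ?_⟩
    exact hS a ha b hb (Or.inl hab.1)
  · have hSK := subset_of_mem_cf_restrictAF hS
    refine ⟨hSK.trans inter_subset_left, ?_⟩
    rintro a ha b hb (hab | hab)
    · exact hS.2 a ha b hb ⟨hab, (hSK ha).2, (hSK hb).2⟩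
    · exact hab.2.2 (hSK hb).2

theorem adm_connectify : (F.connectify K).adm = (restrictAF F K).adm := by
  ext S
  refine ⟨fun ⟨hcf, hS⟩ => ?_, fun ⟨hcf, hS⟩ => ?_⟩
  · rw [cf_connectify] at hcf
    have hSK := subset_of_mem_cf_restrictAF hcf
    refine ⟨hcf, fun x hx b hb => ?_⟩
    obtain ⟨s, hs, hsb | hsb⟩ := hS x hx b (Or.inl hb.1)
    · exact ⟨s, hs, hsb, (hSK hs).2, hb.2.1⟩
    · exact absurd hb.2.1 hsb.2.2
  · have hSK := subset_of_mem_cf_restrictAF hcf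
    refine ⟨cf_connectify ▸ hcf, ?_⟩
    rintro x hx b (hb | hb)
    · by_cases hbK : b ∈ K
      · obtain ⟨s, hs, hsb⟩ := hS x hx b ⟨hb, hbK, (hSK hx).2⟩
        exact ⟨s, hs, Or.inl hsb.1⟩
      -- an attacker from outside `K` is counter-attacked by `x` itself
      · exact ⟨x, hx, Or.inr ⟨(hSK hx).1, (F.R_sub _ hb).1, hbK⟩⟩
    · exact absurd (hSK hx).2 hb.2.2

theorem rng_connectify (hS : S ⊆ ↑F.A ∩ K) (hne : S.Nonempty) :
    (F.connectify K).rng S = (restrictAF F K).rng S ∪ (↑F.A \ K) := by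
  ext x
  constructor
  · rintro (hx | ⟨s, hs, hsx | hsx⟩)
    · exact Or.inl (Or.inl hx)
    · by_cases hxK : x ∈ K
      · exact Or.inl (Or.inr ⟨s, hs, hsx, (hS hs).2, hxK⟩)
      · exact Or.inr ⟨(F.R_sub _ hsx).2, hxK⟩
    · exact Or.inr hsx.2
  · rintro ((hx | ⟨s, hs, hsx⟩) | hx)
    · exact Or.inl hx
    · exact Or.inr ⟨s, hs, Or.inl hsx.1⟩
    · obtain ⟨s, hs⟩ := hne
      exact Or.inr ⟨s, hs, Or.inr ⟨(hS hs).1, hx⟩⟩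

theorem stb_restrictAF_subset_connectify (hnt : (restrictAF F K).stb.Nontrivial) :
    (restrictAF F K).stb ⊆ (F.connectify K).stb := by
  intro S hS
  obtain ⟨s₀, hs₀⟩ : S.Nonempty := nonempty_iff_ne_empty.2 fun h0 =>
    hnt.not_subset_singleton (stb_subset_singleton_empty (h0 ▸ hS))
  have hSK := subset_of_mem_cf_restrictAF hS.1
  refine ⟨cf_connectify ▸ hS.1, fun x hx hxS => ?_⟩
  by_cases hxK : x ∈ K
  · obtain ⟨s, hs, hsx⟩ := hS.2 x (mem_restrictAF_A.2 ⟨hx, hxK⟩) hxS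
    exact ⟨s, hs, Or.inl hsx.1⟩
  · exact ⟨s₀, hs₀, Or.inr ⟨(hSK hs₀).1, hx, hxK⟩⟩

theorem finite_of_subset_cf (hW : W ⊆ F.cf) : W.Finite :=
  F.A.finite_toSet.powerset.subset fun _ hS => (hW hS).1

theorem ncard_le_two_pow_of_subset_cf (hW : W ⊆ F.cf) : W.ncard ≤ 2 ^ F.A.card :=
  calc W.ncard ≤ (𝒫 (F.A : Set ℕ)).ncard :=
        ncard_le_ncard (fun _ hS => (hW hS).1) F.A.finite_toSet.powerset
    _ = 2 ^ F.A.card := by rw [ncard_powerset _ F.A.finite_toSet, ncard_coe_finset]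

end AF

open AF

section Counting

variable {σ B : Semantics} {F G : AF} {K : Set ℕ}

theorem argS_eq_of_compact (hcf : σ F ⊆ F.cf) (hF : AFCompact σ F) : ArgS (σ F) = F.A :=
  subset_antisymm (sUnion_subset fun _ hS => (hcf hS).1) fun x hx => mem_sUnion.2 (hF x hx)

theorem nontrivial_of_compact_of_mem_R (hcf : σ F ⊆ F.cf) (hF : AFCompact σ F) {a b : ℕ}
    (hab : (a, b) ∈ F.R) : (σ F).Nontrivial := by
  obtain ⟨S, hS, haS⟩ := hF a (F.R_sub _ hab).1
  obtain ⟨T, hT, hbT⟩ := hF b (F.R_sub _ hab).2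
  refine ⟨S, hS, T, hT, ?_⟩
  rintro rfl
  exact (hcf hS).2 a haS b hbT hab

theorem ncard_le_sigmaMaxCon (hcf : ∀ G : AF, σ G ⊆ G.cf) (hG : AFConnected G) :
    (σ G).ncard ≤ sigmaMaxCon σ G.A.card := by
  refine le_csSup ⟨2 ^ G.A.card, ?_⟩ ⟨G, rfl, hG, rfl⟩
  rintro _ ⟨H, hH, -, rfl⟩
  exact hH ▸ ncard_le_two_pow_of_subset_cf (hcf H)

structure Decomposable (σ : Semantics) : Prop where
  subset_cf : ∀ G : AF, σ G ⊆ G.cf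
  inter_mem : ∀ {G : AF} {K : Set ℕ}, G.NoAttackAcross K →
    ∀ S ∈ σ G, S ∩ K ∈ σ (restrictAF G K)
  union_mem : ∀ {G : AF} {K : Set ℕ}, G.NoAttackAcross K →
    ∀ S ∈ σ (restrictAF G K), ∀ T ∈ σ (restrictAF G Kᶜ), S ∪ T ∈ σ G

theorem decomposable_cf : Decomposable AF.cf :=
  ⟨fun _ _ h => h, fun _ _ hS => inter_mem_cf_restrictAF hS, fun h _ hS _ hT => union_mem_cf h hS hT⟩

theorem decomposable_adm : Decomposable AF.adm :=
  ⟨fun _ _ h => h.1, fun h _ hS => inter_mem_adm_restrictAF h hS,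
    fun h _ hS _ hT => union_mem_adm h hS hT⟩

theorem decomposable_stb : Decomposable AF.stb :=
  ⟨fun _ _ h => h.1, fun h _ hS => inter_mem_stb_restrictAF h hS,
    fun h _ hS _ hT => union_mem_stb h hS hT⟩

namespace Decomposable

variable (hσ : Decomposable σ)
include hσ

theorem subset_of_mem_restrictAF {S : Set ℕ} (hS : S ∈ σ (restrictAF G K)) : S ⊆ K :=
  (subset_of_mem_cf_restrictAF (hσ.subset_cf _ hS)).trans inter_subset_right

theorem compact_restrictAF (h : F.NoAttackAcross K) (hF : AFCompact σ F) :
    AFCompact σ (restrictAF F K) := by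
  intro x hx
  obtain ⟨hxA, hxK⟩ := mem_restrictAF_A.1 hx
  obtain ⟨S, hS, hxS⟩ := hF x hxA
  exact ⟨S ∩ K, hσ.inter_mem h S hS, hxS, hxK⟩

theorem ncard_eq_mul (h : G.NoAttackAcross K) :
    (σ G).ncard = (σ (restrictAF G K)).ncard * (σ (restrictAF G Kᶜ)).ncard := by
  have hbij : BijOn (fun S => (S ∩ K, S ∩ Kᶜ)) (σ G)
      (σ (restrictAF G K) ×ˢ σ (restrictAF G Kᶜ)) := by
    refine ⟨fun S hS => ⟨hσ.inter_mem h S hS, hσ.inter_mem h.compl S hS⟩,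
      fun S _ T _ hST => ?_, ?_⟩
    · simp only [Prod.mk.injEq] at hST
      rw [← inter_union_compl S K, ← inter_union_compl T K, hST.1, hST.2]
    · rintro ⟨S, T⟩ ⟨hS, hT⟩
      have hSK := hσ.subset_of_mem_restrictAF hS
      have hTK := hσ.subset_of_mem_restrictAF hT
      exact ⟨S ∪ T, hσ.union_mem h S hS T hT, by
        simp only [union_inter_eq_left_of_subset hSK hTK,
          union_inter_compl_eq_right_of_subset hSK hTK]⟩
  rw [← ncard_prod, ← hbij.image_eq, hbij.injOn.ncard_image]

end Decomposable

def maxSubset (B : Semantics) : Semantics :=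
  fun F => {S | S ∈ B F ∧ ∀ T ∈ B F, S ⊆ T → S = T}

def maxRange (B : Semantics) : Semantics :=
  fun F => {S | S ∈ B F ∧ ¬ ∃ T ∈ B F, F.rng S ⊂ F.rng T}

theorem Decomposable.maxSubset (hB : Decomposable B) : Decomposable (maxSubset B) where
  subset_cf G _ hS := hB.subset_cf G hS.1
  inter_mem {G K} h S hS := by
    refine ⟨hB.inter_mem h S hS.1, fun T hT hST => ?_⟩
    have hTK := hB.subset_of_mem_restrictAF hT
    have hS_eq : S = T ∪ S ∩ Kᶜ :=
      hS.2 _ (hB.union_mem h T hT _ (hB.inter_mem h.compl S hS.1))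
        ((inter_union_compl S K).symm.trans_subset (union_subset_union_left _ hST))
    rw [hS_eq, union_inter_eq_left_of_subset hTK inter_subset_right]
  union_mem {G K} h S hS T hT := by
    have hSK := hB.subset_of_mem_restrictAF hS.1
    have hTK := hB.subset_of_mem_restrictAF hT.1
    refine ⟨hB.union_mem h S hS.1 T hT.1, fun U hU hSTU => ?_⟩
    rw [hS.2 _ (hB.inter_mem h U hU) (subset_inter (subset_union_left.trans hSTU) hSK),
      hT.2 _ (hB.inter_mem h.compl U hU) (subset_inter (subset_union_right.trans hSTU) hTK),
      inter_union_compl]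

theorem Decomposable.maxRange (hB : Decomposable B) : Decomposable (maxRange B) where
  subset_cf G _ hS := hB.subset_cf G hS.1
  inter_mem {G K} h S hS := by
    refine ⟨hB.inter_mem h S hS.1, fun ⟨T, hT, hST⟩ => hS.2 ⟨T ∪ S ∩ Kᶜ,
      hB.union_mem h T hT _ (hB.inter_mem h.compl S hS.1), ?_⟩⟩
    have hTK := hB.subset_of_mem_restrictAF hT
    rw [ssubset_iff_inter_and_inter_compl K]
    simp only [G.rng_inter_eq h, G.rng_inter_eq h.compl,
      union_inter_eq_left_of_subset hTK inter_subset_right,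
      union_inter_compl_eq_right_of_subset hTK inter_subset_right]
    exact Or.inl ⟨hST, subset_rfl⟩
  union_mem {G K} h S hS T hT := by
    have hSK := hB.subset_of_mem_restrictAF hS.1
    have hTK := hB.subset_of_mem_restrictAF hT.1
    refine ⟨hB.union_mem h S hS.1 T hT.1, fun ⟨U, hU, hSTU⟩ => ?_⟩
    rw [ssubset_iff_inter_and_inter_compl K] at hSTU
    simp only [G.rng_inter_eq h, G.rng_inter_eq h.compl, union_inter_eq_left_of_subset hSK hTK,
      union_inter_compl_eq_right_of_subset hSK hTK] at hSTU
    rcases hSTU with ⟨hlt, -⟩ | ⟨-, hlt⟩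
    · exact hS.2 ⟨U ∩ K, hB.inter_mem h U hU, hlt⟩
    · exact hT.2 ⟨U ∩ Kᶜ, hB.inter_mem h.compl U hU, hlt⟩

theorem maxSubset_congr (h : B F = B G) : maxSubset B F = maxSubset B G := by
  simp only [maxSubset, h]

theorem maxSubset_eq_singleton_of_R_eq_empty (hB : B F = F.cf) (hR : F.R = ∅) :
    maxSubset B F = {(↑F.A : Set ℕ)} := by
  have hA : (↑F.A : Set ℕ) ∈ B F := hB ▸ coe_A_mem_cf_of_R_eq_empty hR
  ext S
  refine ⟨fun hS => hS.2 _ hA (hB ▸ hS.1).1, ?_⟩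
  rintro rfl
  exact ⟨hA, fun T hT hAT => subset_antisymm hAT (hB ▸ hT).1⟩

theorem maxRange_eq_singleton_of_R_eq_empty (hB : B F = F.cf) (hR : F.R = ∅) :
    maxRange B F = {(↑F.A : Set ℕ)} := by
  have hA : (↑F.A : Set ℕ) ∈ B F := hB ▸ coe_A_mem_cf_of_R_eq_empty hR
  ext S
  simp only [maxRange, mem_singleton_iff, rng_eq_self_of_R_eq_empty hR]
  refine ⟨fun ⟨hS, hmax⟩ => ?_, ?_⟩
  · by_contra hne
    exact hmax ⟨_, hA, (hB ▸ hS).1.ssubset_of_ne hne⟩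
  · rintro rfl
    exact ⟨hA, fun ⟨T, hT, hAT⟩ => hAT.not_subset (hB ▸ hT).1⟩

theorem maxRange_subset_singleton_empty (h : ∅ ∈ maxRange B F) : maxRange B F ⊆ {∅} := by
  intro T hT
  by_contra hT0
  refine h.2 ⟨T, hT.1, ?_⟩
  rw [rng_empty]
  exact empty_ssubset.2 ((nonempty_iff_ne_empty.2 hT0).mono subset_union_left)

theorem maxRange_restrictAF_subset_connectify (hB : B (F.connectify K) = B (restrictAF F K))
    (hcf : B (restrictAF F K) ⊆ (restrictAF F K).cf)
    (hnt : (maxRange B (restrictAF F K)).Nontrivial) :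
    maxRange B (restrictAF F K) ⊆ maxRange B (F.connectify K) := by
  intro S hS
  have hSne : S.Nonempty := nonempty_iff_ne_empty.2 fun h0 =>
    hnt.not_subset_singleton (maxRange_subset_singleton_empty (h0 ▸ hS))
  refine ⟨hB ▸ hS.1, fun ⟨T, hT, hST⟩ => ?_⟩
  rw [hB] at hT
  have hSK := subset_of_mem_cf_restrictAF (hcf hS.1)
  have hTK := subset_of_mem_cf_restrictAF (hcf hT)
  rcases T.eq_empty_or_nonempty with rfl | hTne
  · rw [rng_empty] at hST
    exact hST.2 (empty_subset _)
  have hSrng := rng_restrictAF_subset (F := F) (hSK.trans inter_subset_right)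
  have hTrng := rng_restrictAF_subset (F := F) (hTK.trans inter_subset_right)
  have hout := sdiff_subset_compl (F.A : Set ℕ) K
  rw [rng_connectify hSK hSne, rng_connectify hTK hTne, ssubset_iff_inter_and_inter_compl K,
    union_inter_eq_left_of_subset hSrng hout, union_inter_eq_left_of_subset hTrng hout,
    union_inter_compl_eq_right_of_subset hSrng hout,
    union_inter_compl_eq_right_of_subset hTrng hout] at hST
  rcases hST with ⟨hlt, -⟩ | ⟨-, hlt⟩
  · exact hS.2 ⟨T, hT, hlt⟩
  · exact hlt.ne rfl

theorem ncard_le_sigmaMaxCon_of_prime (hσ : Decomposable σ)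
    (hempty : ∀ G : AF, G.R = ∅ → σ G = {(↑G.A : Set ℕ)})
    (hconn : ∀ (G : AF) (K : Set ℕ),
      (σ (restrictAF G K)).Nontrivial → σ (restrictAF G K) ⊆ σ (G.connectify K))
    (hF : AFCompact σ F) (hprime : (σ F).ncard.Prime) :
    (σ F).ncard ≤ sigmaMaxCon σ (ArgS (σ F)).ncard := by
  rw [argS_eq_of_compact (hσ.subset_cf F) hF, ncard_coe_finset]
  obtain ⟨⟨a, b⟩, hab⟩ : F.R.Nonempty := nonempty_iff_ne_empty.2 fun hR => by
    rw [hempty F hR, ncard_singleton] at hprime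
    exact Nat.not_prime_one hprime
  set K := {x | sameComp F a x}
  have hK : F.NoAttackAcross K := F.noAttackAcross_sameComp a
  have hnt : (σ (restrictAF F K)).Nontrivial :=
    nontrivial_of_compact_of_mem_R (hσ.subset_cf _) (hσ.compact_restrictAF hK hF)
      (a := a) (b := b) ⟨hab, .refl, .single (Or.inl hab)⟩
  have hcard : (σ F).ncard = (σ (restrictAF F K)).ncard := by
    have : Finite (σ (restrictAF F K)) := finite_of_subset_cf (hσ.subset_cf _)
    have h1 : 1 < (σ (restrictAF F K)).ncard := one_lt_ncard_iff_nontrivial.2 hnt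
    rw [hσ.ncard_eq_mul hK] at hprime ⊢
    rcases Nat.prime_mul_iff.1 hprime with ⟨-, h⟩ | ⟨-, h⟩
    · rw [h, mul_one]
    · omega
  have hconnected : AFConnected (F.connectify K) := by
    have : Std.Symm (AFStep F) := ⟨fun _ _ h => h.symm⟩
    exact connectify_connected fun x _ y _ hx hy => (Std.Symm.symm _ _ hx).trans hy
  calc (σ F).ncard = (σ (restrictAF F K)).ncard := hcard
    _ ≤ (σ (F.connectify K)).ncard :=
      ncard_le_ncard (hconn F K hnt) (finite_of_subset_cf (hσ.subset_cf _))
    _ ≤ sigmaMaxCon σ F.A.card := ncard_le_sigmaMaxCon hσ.subset_cf hconnected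

end Counting

theorem prime_extension_count_bound_general (σ : Semantics) (hσ : σ ∈ StandardSemantics)
    (𝕊 : Set (Set ℕ))
    (F : AF) (hcomp : AFCompact σ F) (hσF : σ F = 𝕊)
    (hprime : Nat.Prime 𝕊.ncard) :
    𝕊.ncard ≤ sigmaMaxCon σ (ArgS 𝕊).ncard := by
  subst hσF
  simp only [StandardSemantics, mem_insert_iff, mem_singleton_iff] at hσ
  rcases hσ with rfl | rfl | rfl | rfl | rfl
  · exact ncard_le_sigmaMaxCon_of_prime (σ := maxSubset AF.cf) decomposable_cf.maxSubset
      (fun _ hR => maxSubset_eq_singleton_of_R_eq_empty rfl hR)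
      (fun _ _ _ => (maxSubset_congr cf_connectify).ge) hcomp hprime
  · exact ncard_le_sigmaMaxCon_of_prime decomposable_stb
      (fun _ hR => stb_eq_singleton_of_R_eq_empty hR)
      (fun _ _ hnt => stb_restrictAF_subset_connectify hnt) hcomp hprime
  · exact ncard_le_sigmaMaxCon_of_prime (σ := maxRange AF.cf) decomposable_cf.maxRange
      (fun _ hR => maxRange_eq_singleton_of_R_eq_empty rfl hR)
      (fun _ _ hnt => maxRange_restrictAF_subset_connectify cf_connectify subset_rfl hnt)
      hcomp hprime
  · exact ncard_le_sigmaMaxCon_of_prime (σ := maxSubset AF.adm) decomposable_adm.maxSubset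
      (fun _ hR => maxSubset_eq_singleton_of_R_eq_empty (adm_eq_cf_of_R_eq_empty hR) hR)
      (fun _ _ _ => (maxSubset_congr adm_connectify).ge) hcomp hprime
  · exact ncard_le_sigmaMaxCon_of_prime (σ := maxRange AF.adm) decomposable_adm.maxRange
      (fun _ hR => maxRange_eq_singleton_of_R_eq_empty (adm_eq_cf_of_R_eq_empty hR) hR)
      (fun _ _ hnt => maxRange_restrictAF_subset_connectify adm_connectify
        (decomposable_adm.subset_cf _) hnt) hcomp hprime

theorem prime_extension_count_bound (σ : Semantics) (hσ : σ ∈ StandardSemantics)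
    (𝕊 : Set (Set ℕ)) (hext : IsExtensionSet 𝕊)
    (F : AF) (hcomp : AFCompact σ F) (hσF : σ F = 𝕊)
    (hprime : Nat.Prime 𝕊.ncard) :
    𝕊.ncard ≤ sigmaMaxCon σ (ArgS 𝕊).ncard :=
  prime_extension_count_bound_general σ hσ 𝕊 F hcomp hσF hprime
end

section
/- Let σ ∈ {naive, stb, stage, pref, sem} and let 𝕊 be an extension-set realized by some σ-compact AF (σ(F) = 𝕊 for some σ-compact F). Then Ω(|𝕊|) ≥ |K_{≥2}(𝕊)|, where Ω(m) denotes the number of prime factors of m counted with multiplicity and K_{≥2}(𝕊) denotes the set of classes of K(𝕊) of size at least 2. -/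
/-!
Every extension is conflict-free and every argument of the compact framework `F` lies in some
extension, so an attack never joins two arguments that occur together in an extension: no attack
leaves a class `K` of `K(𝕊)`. Hence replacing the part inside `K` of one extension by that of
another (`K.ite S T`) preserves conflict-freeness, admissibility, stability and ranges, and, by an
exchange argument, ⊆- and range-maximality; so `𝕊` is closed under `K.ite` for every class `K`.
Then `𝕊` is the product of its traces on the classes, `|𝕊| = ∏_K |{S ∩ K | S ∈ 𝕊}|`, and a class
with at least two arguments has two different traces (take the first step `a, c` of a path in
it: an extension containing `a` and one containing `c` differ on `K`). Taking `Ω` of the product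
gives the bound.
-/

open scoped ArithmeticFunction.Omega

namespace Set

variable {α : Type*}

def IteClosed (𝒞 : Set (Set α)) (K : Set α) : Prop :=
  ∀ S ∈ 𝒞, ∀ T ∈ 𝒞, K.ite S T ∈ 𝒞

lemma IteClosed.compl {𝒞 : Set (Set α)} {K : Set α} (h : IteClosed 𝒞 K) : IteClosed 𝒞 Kᶜ :=
  fun S hS T hT => by rw [ite_compl]; exact h T hT S hS

lemma eq_ite_iff {t s s' u : Set α} : u = t.ite s s' ↔ u ∩ t = s ∩ t ∧ u \ t = s' \ t := by
  refine ⟨fun h => h ▸ ⟨ite_inter_self .., ite_sdiff_self ..⟩, fun ⟨h₁, h₂⟩ => ?_⟩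
  rw [← inter_union_sdiff u t, h₁, h₂]
  rfl

def maximalsBy {β : Type*} (r : Set α → Set β) (𝒞 : Set (Set α)) : Set (Set α) :=
  {S | S ∈ 𝒞 ∧ ¬ ∃ T ∈ 𝒞, r S ⊂ r T}

lemma setOf_maximal_eq_maximalsBy_id (𝒞 : Set (Set α)) :
    {S | S ∈ 𝒞 ∧ ∀ T ∈ 𝒞, S ⊆ T → S = T} = maximalsBy id 𝒞 := by
  ext S
  simp only [maximalsBy, mem_ofPred_eq, id, ssubset_iff_subset_ne, not_exists, not_and, not_not]

section maximalsBy

variable {𝒞 : Set (Set α)} {K : Set α} {r : Set α → Set α}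

lemma inter_eq_of_mem_maximalsBy (hK : IteClosed 𝒞 K)
    (hr : ∀ X Y, r (K.ite X Y) = K.ite (r X) (r Y)) {S V : Set α}
    (hS : S ∈ maximalsBy r 𝒞) (hV : V ∈ 𝒞) (hSV : r S ∩ K ⊆ r V) : r V ∩ K = r S ∩ K := by
  have hle : r S ⊆ r (K.ite V S) := by
    rw [hr, subset_ite]
    exact ⟨hSV, sdiff_subset⟩
  have heq : r S = r (K.ite V S) :=
    eq_of_subset_of_not_ssubset hle fun h => hS.2 ⟨_, hK V hV S hS.1, h⟩
  rw [heq, hr, ite_inter_self]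

theorem IteClosed.maximalsBy (hK : IteClosed 𝒞 K)
    (hr : ∀ X Y, r (K.ite X Y) = K.ite (r X) (r Y)) : IteClosed (maximalsBy r 𝒞) K := by
  intro S hS T hT
  refine ⟨hK S hS.1 T hT.1, fun ⟨V, hV, hlt⟩ => hlt.ne ?_⟩
  rw [hr] at hlt ⊢
  have hrc : ∀ X Y, r (Kᶜ.ite X Y) = Kᶜ.ite (r X) (r Y) := fun X Y => by
    rw [ite_compl, ite_compl, hr]
  have hin := inter_eq_of_mem_maximalsBy hK hr hS hV
    (fun x hx => hlt.subset (by rw [← ite_inter_self K (r S) (r T)] at hx; exact hx.1))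
  have hout := inter_eq_of_mem_maximalsBy hK.compl hrc hT hV
    (fun x hx => hlt.subset (by rw [← ite_inter_compl_self K (r S) (r T)] at hx; exact hx.1))
  rw [eq_comm, eq_ite_iff, sdiff_eq, sdiff_eq]
  exact ⟨hin, hout⟩

end maximalsBy

variable (𝒮 : Set (Set α))

def trace (U : Set α) : Set (Set α) := (· ∩ U) '' 𝒮

variable {𝒮}

lemma trace_eq_self {U : Set α} (h : ∀ S ∈ 𝒮, S ⊆ U) : trace 𝒮 U = 𝒮 := by
  ext V
  constructor
  · rintro ⟨S, hS, rfl⟩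
    rwa [← inter_eq_left.2 (h S hS)] at hS
  · exact fun hV => ⟨V, hV, inter_eq_left.2 (h V hV)⟩

theorem IteClosed.ncard_trace_union {K W : Set α} (hK : IteClosed 𝒮 K) (hKW : Disjoint K W) :
    (trace 𝒮 (K ∪ W)).ncard = (trace 𝒮 K).ncard * (trace 𝒮 W).ncard := by
  rw [← ncard_prod]
  refine BijOn.ncard_eq (f := fun U => (U ∩ K, U ∩ W)) ⟨?_, ?_, ?_⟩
  · rintro _ ⟨S, hS, rfl⟩
    refine ⟨⟨S, hS, ?_⟩, ⟨S, hS, ?_⟩⟩ <;> simp only [inter_assoc, union_inter_cancel_left,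
      union_inter_cancel_right]
  · rintro _ ⟨S, hS, rfl⟩ _ ⟨T, hT, rfl⟩ h
    simp only [Prod.mk.injEq, inter_assoc, union_inter_cancel_left,
      union_inter_cancel_right] at h
    simp only [inter_union_distrib_left, h.1, h.2]
  · rintro ⟨_, _⟩ ⟨⟨S, hS, rfl⟩, ⟨T, hT, rfl⟩⟩
    refine ⟨K.ite S T ∩ (K ∪ W), ⟨_, hK S hS T hT, rfl⟩, ?_⟩
    simp only [Prod.mk.injEq, inter_assoc, union_inter_cancel_left,
      union_inter_cancel_right, ite_inter_self, true_and]
    rw [← inter_eq_right.2 hKW.subset_compl_left, ← inter_assoc, ite_inter_compl_self, inter_assoc]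

theorem ncard_trace_sUnion (h𝒮 : 𝒮.Nonempty) (P : Finset (Set α))
    (hP : (P : Set (Set α)).PairwiseDisjoint id) (hK : ∀ K ∈ P, IteClosed 𝒮 K) :
    (trace 𝒮 (⋃₀ P)).ncard = ∏ K ∈ P, (trace 𝒮 K).ncard := by
  induction P using Finset.induction_on with
  | empty => simp [trace, h𝒮.image_const]
  | @insert K P hKP ih =>
    rw [Finset.prod_insert hKP, Finset.coe_insert, sUnion_insert]
    rw [Finset.coe_insert] at hP
    rw [(hK K (P.mem_insert_self K)).ncard_trace_union, ih (hP.subset (subset_insert _ _))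
      fun K' hK' => hK K' (Finset.mem_insert_of_mem hK')]
    exact disjoint_sUnion_right.2 fun K' hK' =>
      hP (mem_insert K _) (mem_insert_of_mem _ hK') (ne_of_mem_of_not_mem hK' hKP).symm

end Set

theorem ArithmeticFunction.cardFactors_prod {ι : Type*} {s : Finset ι} {f : ι → ℕ}
    (hf : ∀ i ∈ s, f i ≠ 0) : Ω (∏ i ∈ s, f i) = ∑ i ∈ s, Ω (f i) := by
  rw [Finset.prod_eq_multiset_prod, cardFactors_multiset_prod
    (by rw [← Finset.prod_eq_multiset_prod]; exact Finset.prod_ne_zero_iff.2 hf), Multiset.map_map]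
  rfl

section Components

variable {𝕊 : Set (Set ℕ)}

lemma pairsS_comm {a b : ℕ} : (a, b) ∈ PairsS 𝕊 ↔ (b, a) ∈ PairsS 𝕊 :=
  ⟨fun ⟨S, hS, ha, hb⟩ => ⟨S, hS, hb, ha⟩, fun ⟨S, hS, hb, ha⟩ => ⟨S, hS, ha, hb⟩⟩

instance : Std.Symm (nopairs 𝕊) :=
  ⟨fun _ _ ⟨ha, hb, hab⟩ => ⟨hb, ha, pairsS_comm.not.1 hab⟩⟩

lemma eq_reachable_of_mem_compsS {K : Set ℕ} (hK : K ∈ compsS 𝕊) {a : ℕ} (ha : a ∈ K) :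
    K = {b ∈ ArgS 𝕊 | Relation.ReflTransGen (nopairs 𝕊) a b} := by
  obtain ⟨c, -, rfl⟩ := hK
  ext b
  refine ⟨fun hb => ⟨hb.1, ?_⟩, fun hb => ⟨hb.1, ha.2.trans hb.2⟩⟩
  exact (Std.Symm.symm _ _ ha.2).trans hb.2

lemma subset_argS_of_mem_compsS {K : Set ℕ} (hK : K ∈ compsS 𝕊) : K ⊆ ArgS 𝕊 := by
  obtain ⟨a, -, rfl⟩ := hK
  exact fun _ hb => hb.1

lemma mem_compsS_of_notMem_pairsS {K : Set ℕ} (hK : K ∈ compsS 𝕊) {a b : ℕ} (ha : a ∈ K)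
    (hb : b ∈ ArgS 𝕊) (hab : (a, b) ∉ PairsS 𝕊) : b ∈ K := by
  rw [eq_reachable_of_mem_compsS hK ha]
  exact ⟨hb, .single ⟨subset_argS_of_mem_compsS hK ha, hb, hab⟩⟩

lemma pairwiseDisjoint_compsS : (compsS 𝕊).PairwiseDisjoint id := by
  intro K hK L hL hKL
  refine Set.disjoint_left.2 fun a haK haL => hKL ?_
  rw [eq_reachable_of_mem_compsS hK haK, eq_reachable_of_mem_compsS hL haL]

lemma sUnion_compsS : ⋃₀ compsS 𝕊 = ArgS 𝕊 := by
  refine Set.Subset.antisymm (Set.sUnion_subset fun K hK => subset_argS_of_mem_compsS hK) ?_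
  exact fun a ha => ⟨_, ⟨a, ha, rfl⟩, ha, .refl⟩

lemma IsExtensionSet.finite_compsS (h : IsExtensionSet 𝕊) : (compsS 𝕊).Finite :=
  h.finite_subsets.subset fun _ hK => subset_argS_of_mem_compsS hK

lemma IsExtensionSet.finite (h : IsExtensionSet 𝕊) : 𝕊.Finite :=
  h.finite_subsets.subset fun _ hS => Set.subset_sUnion_of_mem hS

lemma two_le_ncard_trace_of_mem_compsS (h𝕊 : 𝕊.Finite) {K : Set ℕ} (hK : K ∈ compsS 𝕊)
    (hK2 : 2 ≤ K.ncard) : 2 ≤ (Set.trace 𝕊 K).ncard := by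
  obtain ⟨a, b, ha, hb, hab⟩ := (Set.one_lt_ncard_iff (Set.finite_of_ncard_pos (by omega))).1 hK2
  rw [eq_reachable_of_mem_compsS hK ha] at hb
  obtain rfl | ⟨c, ⟨⟨S, hS, haS⟩, ⟨T, hT, hcT⟩, hac⟩, -⟩ := hb.2.cases_head
  · exact absurd rfl hab
  refine (Set.one_lt_ncard_iff (h𝕊.image _)).2 ⟨S ∩ K, T ∩ K, ⟨S, hS, rfl⟩, ⟨T, hT, rfl⟩, ?_⟩
  intro hST
  have haT : a ∈ T := (hST ▸ ⟨haS, ha⟩ : a ∈ T ∩ K).1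
  exact hac ⟨T, hT, haT, hcT⟩

end Components

theorem ncard_nontrivial_compsS_le_cardFactors {𝕊 : Set (Set ℕ)} (hext : IsExtensionSet 𝕊)
    (hK : ∀ K ∈ compsS 𝕊, Set.IteClosed 𝕊 K) :
    {C ∈ compsS 𝕊 | 2 ≤ C.ncard}.ncard ≤ Ω 𝕊.ncard := by
  classical
  rcases 𝕊.eq_empty_or_nonempty with rfl | h𝕊
  · simp [compsS, ArgS]
  set P := hext.finite_compsS.toFinset
  have hprod : 𝕊.ncard = ∏ K ∈ P, (Set.trace 𝕊 K).ncard := by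
    rw [← Set.ncard_trace_sUnion h𝕊 P (by simpa [P] using pairwiseDisjoint_compsS)
      (by simpa [P] using hK), Set.Finite.coe_toFinset, sUnion_compsS,
      Set.trace_eq_self (U := ArgS 𝕊) fun S hS => Set.subset_sUnion_of_mem hS]
  have hpos : ∀ K ∈ P, (Set.trace 𝕊 K).ncard ≠ 0 := fun K _ =>
    ((Set.ncard_pos (hext.finite.image _)).2 (h𝕊.image _)).ne'
  calc {C ∈ compsS 𝕊 | 2 ≤ C.ncard}.ncard
      = ∑ K ∈ P, if 2 ≤ K.ncard then 1 else 0 := by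
        rw [← Finset.card_filter, ← Set.ncard_coe_finset]
        congr 1
        ext C
        simp [P]
    _ ≤ ∑ K ∈ P, Ω (Set.trace 𝕊 K).ncard := by
        refine Finset.sum_le_sum fun K hKP => ?_
        split_ifs with hK2
        · exact ArithmeticFunction.cardFactors_pos_iff_one_lt.2
            (two_le_ncard_trace_of_mem_compsS hext.finite (by simpa [P] using hKP) hK2)
        · exact Nat.zero_le _
    _ = Ω 𝕊.ncard := by rw [hprod, ArithmeticFunction.cardFactors_prod hpos]

namespace AF

def NoCrossAttacks (F : AF) (K : Set ℕ) : Prop :=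
  ∀ a b, (a, b) ∈ F.R → (a ∈ K ↔ b ∈ K)

variable {F : AF} {K : Set ℕ}

lemma noCrossAttacks_of_mem_compsS {𝕊 : Set (Set ℕ)} (hcf : 𝕊 ⊆ F.cf) (hA : ↑F.A ⊆ ArgS 𝕊)
    (hK : K ∈ compsS 𝕊) : F.NoCrossAttacks K := by
  intro a b hab
  have hnp : (a, b) ∉ PairsS 𝕊 := fun ⟨S, hS, ha, hb⟩ => (hcf hS).2 a ha b hb hab
  obtain ⟨ha, hb⟩ := F.R_sub _ hab
  exact ⟨fun haK => mem_compsS_of_notMem_pairsS hK haK (hA hb) hnp,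
    fun hbK => mem_compsS_of_notMem_pairsS hK hbK (hA ha) (pairsS_comm.not.1 hnp)⟩

namespace NoCrossAttacks

lemma iteClosed_cf (hK : F.NoCrossAttacks K) : Set.IteClosed F.cf K := by
  intro S hS T hT
  refine ⟨(Set.ite_subset_union _ _ _).trans (Set.union_subset hS.1 hT.1), ?_⟩
  rintro a (⟨haS, haK⟩ | ⟨haT, haK⟩) b (⟨hbS, hbK⟩ | ⟨hbT, hbK⟩) hab
  · exact hS.2 a haS b hbS hab
  · exact hbK ((hK a b hab).1 haK)
  · exact haK ((hK a b hab).2 hbK)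
  · exact hT.2 a haT b hbT hab

lemma iteClosed_adm (hK : F.NoCrossAttacks K) : Set.IteClosed F.adm K := by
  intro S hS T hT
  refine ⟨hK.iteClosed_cf S hS.1 T hT.1, ?_⟩
  rintro a (⟨haS, haK⟩ | ⟨haT, haK⟩) b hba
  · obtain ⟨s, hs, hsb⟩ := hS.2 a haS b hba
    exact ⟨s, Or.inl ⟨hs, (hK s b hsb).2 ((hK b a hba).2 haK)⟩, hsb⟩
  · obtain ⟨t, ht, htb⟩ := hT.2 a haT b hba
    exact ⟨t, Or.inr ⟨ht, fun htK => haK ((hK b a hba).1 ((hK t b htb).1 htK))⟩, htb⟩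

lemma iteClosed_stb (hK : F.NoCrossAttacks K) : Set.IteClosed F.stb K := by
  intro S hS T hT
  refine ⟨hK.iteClosed_cf S hS.1 T hT.1, fun a ha ha' => ?_⟩
  by_cases haK : a ∈ K
  · obtain ⟨s, hs, hsa⟩ := hS.2 a ha fun haS => ha' (Or.inl ⟨haS, haK⟩)
    exact ⟨s, Or.inl ⟨hs, (hK s a hsa).2 haK⟩, hsa⟩
  · obtain ⟨t, ht, hta⟩ := hT.2 a ha fun haT => ha' (Or.inr ⟨haT, haK⟩)
    exact ⟨t, Or.inr ⟨ht, fun htK => haK ((hK t a hta).1 htK)⟩, hta⟩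

lemma rng_ite (hK : F.NoCrossAttacks K) (X Y : Set ℕ) :
    F.rng (K.ite X Y) = K.ite (F.rng X) (F.rng Y) := by
  ext b
  have hside : ∀ s, (s, b) ∈ F.R → (s ∈ K ↔ b ∈ K) := fun s => hK s b
  by_cases hb : b ∈ K <;>
    simp only [AF.rng, Set.ite, Set.mem_union, Set.mem_inter_iff, Set.mem_sdiff,
      Set.mem_ofPred_eq, hb] <;> grind

end NoCrossAttacks

end AF

lemma subset_cf_of_mem_standardSemantics {σ : Semantics} (hσ : σ ∈ StandardSemantics) (F : AF) :
    σ F ⊆ F.cf := by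
  rcases hσ with rfl | rfl | rfl | rfl | rfl <;> intro S hS
  exacts [hS.1, hS.1, hS.1, hS.1.1, hS.1.1]

lemma AF.NoCrossAttacks.iteClosed {F : AF} {K : Set ℕ} (hK : F.NoCrossAttacks K) {σ : Semantics}
    (hσ : σ ∈ StandardSemantics) : Set.IteClosed (σ F) K := by
  rcases hσ with rfl | rfl | rfl | rfl | rfl
  · rw [AF.naive, Set.setOf_maximal_eq_maximalsBy_id]
    exact hK.iteClosed_cf.maximalsBy fun _ _ => rfl
  · exact hK.iteClosed_stb
  · exact hK.iteClosed_cf.maximalsBy hK.rng_ite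
  · rw [AF.pref, Set.setOf_maximal_eq_maximalsBy_id]
    exact hK.iteClosed_adm.maximalsBy fun _ _ => rfl
  · exact hK.iteClosed_adm.maximalsBy hK.rng_ite

lemma AFCompact.coe_subset_argS {σ : Semantics} {F : AF} (h : AFCompact σ F) :
    ↑F.A ⊆ ArgS (σ F) := fun a ha =>
  let ⟨S, hS, haS⟩ := h a ha
  ⟨S, hS, haS⟩

theorem omega_ge_nontrivial_components (σ : Semantics)
    (hσ : σ ∈ StandardSemantics) (𝕊 : Set (Set ℕ)) (hext : IsExtensionSet 𝕊)
    (F : AF) (hcomp : AFCompact σ F) (hσF : σ F = 𝕊) :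
    {C ∈ compsS 𝕊 | 2 ≤ C.ncard}.ncard ≤ (𝕊.ncard).primeFactorsList.length := by
  subst hσF
  rw [← ArithmeticFunction.cardFactors_apply]
  exact ncard_nontrivial_compsS_le_cardFactors hext fun K hK =>
    (AF.noCrossAttacks_of_mem_compsS (subset_cf_of_mem_standardSemantics hσ F)
      hcomp.coe_subset_argS hK).iteClosed hσ
end

section
/- Assume the explicit-conflict conjecture: for every AF F = (A,R) there exists R' ⊆ A × A such that F' = (A,R') is conflict-explicit under stable semantics and stb(F') = stb(F). Then the c-signature of stable semantics is exactly Σ^c_stb = {𝕊 an extension-set | 𝕊 ⊆ 𝕊⁺ and 𝕊 is independent}. -/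
/-!
A stable extension is a ⊆-maximal set of pairwise co-occurring arguments, so `stb F ⊆ (stb F)⁺`.
For independence, use the explicit-conflict conjecture to pass to a conflict-explicit `F'` with the
same stable extensions: every `S ∈ 𝕊⁻` is conflict-free but not stable in `F'`, so some argument
`f S ∉ S` is unattacked by `S`; conflict-explicitness makes the resulting exclusion-mapping
antisymmetric, and the attacks of `F'` witness the independence condition.
Conversely, an independent `𝕊` with exclusion-mapping `R𝕊` is realized by the AF on `Arg𝕊` whose
attacks are all pairs outside `Pairs𝕊 ∪ R𝕊`.
-/

lemma pairsS_symm {𝕊 : Set (Set ℕ)} {a b : ℕ} (h : (a, b) ∈ PairsS 𝕊) : (b, a) ∈ PairsS 𝕊 :=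
  let ⟨S, hS, ha, hb⟩ := h
  ⟨S, hS, hb, ha⟩

lemma mk_self_mem_pairsS {𝕊 : Set (Set ℕ)} {a : ℕ} (ha : a ∈ ArgS 𝕊) : (a, a) ∈ PairsS 𝕊 :=
  let ⟨S, hS, haS⟩ := ha
  ⟨S, hS, haS, haS⟩

lemma afCompact_iff {σ : Semantics} {F : AF} : AFCompact σ F ↔ (F.A : Set ℕ) ⊆ ArgS (σ F) := by
  simp only [AFCompact, Set.subset_def, Finset.mem_coe, ArgS, Set.mem_sUnion]

namespace AF

variable {F : AF} {S : Set ℕ}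

lemma argS_stb_subset (F : AF) : ArgS F.stb ⊆ F.A := by
  rintro a ⟨S, hS, haS⟩
  exact hS.1.1 haS

lemma notMem_R_of_mem_pairsS_stb {a b : ℕ} (h : (a, b) ∈ PairsS F.stb) : (a, b) ∉ F.R :=
  let ⟨_, hS, ha, hb⟩ := h
  hS.1.2 a ha b hb

lemma mem_plusSet_of_mem_stb {𝕊 : Set (Set ℕ)} (hS : S ∈ F.stb) (hcf : S ∈ cfSet 𝕊)
    (hA : ArgS 𝕊 ⊆ F.A) (hR : ∀ p ∈ PairsS 𝕊, p ∉ F.R) : S ∈ plusSet 𝕊 := by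
  refine ⟨hcf, fun T hT hST => hST.antisymm fun t htT => ?_⟩
  by_contra htS
  obtain ⟨s, hsS, hst⟩ := hS.2 t (hA (hT.1 htT)) htS
  exact hR _ (hT.2 s (hST hsS) t htT) hst

lemma stb_subset_plusSet (F : AF) : F.stb ⊆ plusSet F.stb := fun S hS =>
  mem_plusSet_of_mem_stb hS ⟨fun _ ha => ⟨S, hS, ha⟩, fun _ ha _ hb => ⟨S, hS, ha, hb⟩⟩
    (argS_stb_subset F) fun _ => notMem_R_of_mem_pairsS_stb

lemma mem_cf_of_mem_cfSet_stb (hS : S ∈ cfSet F.stb) : S ∈ F.cf :=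
  ⟨hS.1.trans (argS_stb_subset F), fun a ha b hb => notMem_R_of_mem_pairsS_stb (hS.2 a ha b hb)⟩

lemma exists_unattacked_of_mem_minusSet_stb (hS : S ∈ minusSet F.stb) :
    ∃ a ∈ F.A, a ∉ S ∧ ∀ s ∈ S, (s, a) ∉ F.R := by
  by_contra! h
  exact hS.2 ⟨mem_cf_of_mem_cfSet_stb hS.1.1, h⟩

theorem independent_stb_of_conflictExplicit (hc : AFCompact stb F)
    (hce : ConflictExplicit stb F) : Independent F.stb := by
  have hfree : ∀ S, ∃ a, S ∈ minusSet F.stb → a ∈ F.A ∧ a ∉ S ∧ ∀ s ∈ S, (s, a) ∉ F.R := by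
    intro S
    by_cases hS : S ∈ minusSet F.stb
    · obtain ⟨a, ha⟩ := exists_unattacked_of_mem_minusSet_stb hS
      exact ⟨a, fun _ => ha⟩
    · exact ⟨0, fun h => absurd h hS⟩
  choose f hf using hfree
  have hArg : ArgS F.stb = F.A := (argS_stb_subset F).antisymm (afCompact_iff.1 hc)
  have hf_unattacked : ∀ S ∈ minusSet F.stb, ∀ s ∈ S, (s, f S) ∉ F.R :=
    fun S hS => (hf S hS).2.2
  refine ⟨_, ⟨f, fun S hS => ⟨hArg ▸ (hf S hS).1, (hf S hS).2.1⟩, rfl⟩, ?_, ?_⟩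
  · rintro _ _ ⟨S, hS, haS, rfl, hab⟩ ⟨T, hT, hbT, rfl, -⟩
    have ha : f T ∈ F.A := (hf T hT).1
    have hb : f S ∈ F.A := (hf S hS).1
    rcases hce _ ha _ hb hab with hR | hR
    · exact absurd hR (hf_unattacked S hS _ haS)
    · exact absurd hR (hf_unattacked T hT _ hbT)
  · rintro S hS a ⟨haArg, haS⟩
    obtain ⟨s, hsS, hsa⟩ := hS.2 a (argS_stb_subset F haArg) haS
    refine ⟨s, hsS, ?_⟩
    rintro (⟨T, hT, hsT, rfl, -⟩ | hpair)
    · exact hf_unattacked T hT s hsT hsa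
    · exact notMem_R_of_mem_pairsS_stb hpair hsa

end AF

section Realization

variable {𝕊 : Set (Set ℕ)} (hfin : IsExtensionSet 𝕊) (Rm : Set (ℕ × ℕ))

noncomputable def stbRealization : AF where
  A := hfin.toFinset
  R := {p | p.1 ∈ ArgS 𝕊 ∧ p.2 ∈ ArgS 𝕊 ∧ p ∉ PairsS 𝕊 ∧ p ∉ Rm}
  R_sub := fun _ hp => ⟨hfin.mem_toFinset.2 hp.1, hfin.mem_toFinset.2 hp.2.1⟩

lemma coe_stbRealization_A : ((stbRealization hfin Rm).A : Set ℕ) = ArgS 𝕊 :=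
  hfin.coe_toFinset

variable {hfin Rm} {S : Set ℕ}

lemma mem_cfSet_of_mem_stb_stbRealization (hanti : ∀ a b, (a, b) ∈ Rm → (b, a) ∈ Rm → a = b)
    (hS : S ∈ (stbRealization hfin Rm).stb) : S ∈ cfSet 𝕊 := by
  have hSArg : S ⊆ ArgS 𝕊 := coe_stbRealization_A hfin Rm ▸ hS.1.1
  refine ⟨hSArg, fun a ha b hb => ?_⟩
  by_contra hab
  have hba : (b, a) ∉ PairsS 𝕊 := fun h => hab (pairsS_symm h)
  -- neither (a, b) nor (b, a) is an attack, so both lie in the antisymmetric `Rm`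
  have hab_Rm : (a, b) ∈ Rm := by_contra fun h => hS.1.2 a ha b hb ⟨hSArg ha, hSArg hb, hab, h⟩
  have hba_Rm : (b, a) ∈ Rm := by_contra fun h => hS.1.2 b hb a ha ⟨hSArg hb, hSArg ha, hba, h⟩
  obtain rfl := hanti a b hab_Rm hba_Rm
  exact hab (mk_self_mem_pairsS (hSArg ha))

lemma stb_stbRealization_subset (hRm : IsExclusionMapping 𝕊 Rm)
    (hanti : ∀ a b, (a, b) ∈ Rm → (b, a) ∈ Rm → a = b) : (stbRealization hfin Rm).stb ⊆ 𝕊 := by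
  intro S hS
  have hA := coe_stbRealization_A hfin Rm
  have hplus : S ∈ plusSet 𝕊 := AF.mem_plusSet_of_mem_stb hS
    (mem_cfSet_of_mem_stb_stbRealization hanti hS) hA.symm.subset fun _ hp hR => hR.2.2.1 hp
  by_contra hS𝕊
  obtain ⟨f, hf, rfl⟩ := hRm
  have hminus : S ∈ minusSet 𝕊 := ⟨hplus, hS𝕊⟩
  obtain ⟨s, hsS, hR⟩ := hS.2 (f S) (hA.symm.subset (hf S hminus).1) (hf S hminus).2
  exact hR.2.2.2 ⟨S, hminus, hsS, rfl, hR.2.2.1⟩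

lemma subset_stb_stbRealization
    (hind : ∀ S ∈ 𝕊, ∀ a ∈ ArgS 𝕊 \ S, ∃ s ∈ S, (s, a) ∉ Rm ∪ PairsS 𝕊) :
    𝕊 ⊆ (stbRealization hfin Rm).stb := by
  intro S hS
  have hSArg : S ⊆ ArgS 𝕊 := Set.subset_sUnion_of_mem hS
  refine ⟨⟨coe_stbRealization_A hfin Rm ▸ hSArg, fun a ha b hb hR => hR.2.2.1 ⟨S, hS, ha, hb⟩⟩,
    fun a haA haS => ?_⟩
  have haArg : a ∈ ArgS 𝕊 := coe_stbRealization_A hfin Rm ▸ haA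
  obtain ⟨s, hsS, hsa⟩ := hind S hS a ⟨haArg, haS⟩
  exact ⟨s, hsS, hSArg hsS, haArg, fun h => hsa (Or.inr h), fun h => hsa (Or.inl h)⟩

end Realization

theorem stb_c_signature_under_EC
    (EC : ∀ F : AF, ∃ F' : AF, F'.A = F.A ∧
      ConflictExplicit AF.stb F' ∧ AF.stb F' = AF.stb F) :
    cSig AF.stb = {𝕊 | IsExtensionSet 𝕊 ∧ 𝕊 ⊆ plusSet 𝕊 ∧ Independent 𝕊} := by
  ext 𝕊
  constructor
  · rintro ⟨F, hc, rfl⟩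
    obtain ⟨F', hA, hce, hstb⟩ := EC F
    have hc' : AFCompact AF.stb F' := afCompact_iff.2 (hA ▸ hstb ▸ afCompact_iff.1 hc)
    exact ⟨F.A.finite_toSet.subset (AF.argS_stb_subset F), AF.stb_subset_plusSet F,
      hstb ▸ AF.independent_stb_of_conflictExplicit hc' hce⟩
  · rintro ⟨hfin, -, Rm, hRm, hanti, hind⟩
    have hstb : (stbRealization hfin Rm).stb = 𝕊 :=
      (stb_stbRealization_subset hRm hanti).antisymm (subset_stb_stbRealization hind)
    refine ⟨stbRealization hfin Rm, afCompact_iff.2 ?_, hstb⟩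
    rw [hstb, coe_stbRealization_A]
end
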